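/- Let a_1,…,a_m be nonzero vectors in ℂ^d. For i = 1,…,c let w_i > 0 with Σ_{i=1}^{c} w_i = 1; let R_i be a finite composition of relaxed projections P_{a_v}^{ω_v} with indices v drawn from a list L_i ⊆ {1,…,m} and relaxation parameters ω_v ∈ (0,2); let G_i ⊆ {1,…,m}, α_i < 1, and let C_i be a linear operator on ℂ^d such that C_i x = x whenever ⟨x, a_u⟩ = 0 for all u ∈ G_i, C_i maps H_i := span{a_u : u ∈ G_i} into itself, and ‖C_i x‖ ≤ α_i ‖x‖ for every x ∈ H_i. Assume every index j ∈ {1,…,m} occurs in some list L_i or belongs to some set G_i, and set T = Σ_{i=1}^{c} w_i (C_i ∘ R_i). Then the kernel of I − T equals {x ∈ ℂ^d : ⟨x, a_j⟩ = 0 for all j = 1,…,m}, i.e., the null space of the matrix whose rows are a_1*,…,a_m*. -/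

import Mathlib

/-!
Each relaxed projection `P_a^ω` with `ω ∈ (0, 2)` is nonexpansive, with
`‖P_a^ω x‖² = ‖x‖² - ω (2 - ω) |⟨x, a⟩|² / ‖a‖²`, so it preserves the norm of `x` only when
`⟨x, a⟩ = 0`, i.e. only when it fixes `x`. Likewise each `C_i` is nonexpansive, and preserves the
norm of `x` only when `x ⟂ H_i`: splitting `x = p + q` along `H_i ⊕ H_iᗮ` gives
`‖C_i x‖² = ‖C_i p‖² + ‖q‖²` with `‖C_i p‖ ≤ α_i ‖p‖`. Hence if `x = T x` is a convex combination
of the vectors `C_i (R_i x)`, none longer than `x`, each has the norm of `x`, and by rigidity every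
`a_j` listed in some `L_i` or `G_i` is orthogonal to `x`.
-/

/-- The relaxed projection `P_a^ω x = x - ω (⟨x,a⟩/‖a‖²) a` associated to a vector `a ∈ ℂ^d`
and a real relaxation parameter `ω`. -/
noncomputable def relaxProj {d : ℕ} (a : EuclideanSpace ℂ (Fin d)) (ω : ℝ)
    (x : EuclideanSpace ℂ (Fin d)) : EuclideanSpace ℂ (Fin d) :=
  x - ((ω : ℂ) * ((inner ℂ a x : ℂ) / (‖a‖ : ℂ) ^ 2)) • a

section RelaxProj

variable {d : ℕ} {a : EuclideanSpace ℂ (Fin d)} {ω : ℝ} {x : EuclideanSpace ℂ (Fin d)}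

theorem norm_relaxProj_sq (ha : a ≠ 0) (ω : ℝ) (x : EuclideanSpace ℂ (Fin d)) :
    ‖relaxProj a ω x‖ ^ 2 = ‖x‖ ^ 2 - ω * (2 - ω) * ‖(inner ℂ a x : ℂ)‖ ^ 2 / ‖a‖ ^ 2 := by
  have hna : ‖a‖ ≠ 0 := norm_ne_zero_iff.mpr ha
  have hre : (ω : ℂ) * (inner ℂ a x / (‖a‖ : ℂ) ^ 2) * inner ℂ x a =
      ((ω * ‖(inner ℂ a x : ℂ)‖ ^ 2 / ‖a‖ ^ 2 : ℝ) : ℂ) := by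
    rw [← inner_conj_symm x a, mul_assoc, div_mul_eq_mul_div, Complex.mul_conj']
    push_cast
    ring
  rw [relaxProj, @norm_sub_sq ℂ, inner_smul_right, hre, RCLike.re_to_complex, Complex.ofReal_re,
    norm_smul, norm_mul, norm_div, norm_pow, Complex.norm_real, Complex.norm_real,
    Real.norm_eq_abs, norm_norm]
  field_simp
  rw [sq_abs]
  ring

theorem relaxProj_eq_self_iff (ha : a ≠ 0) (hω : ω ≠ 0) :
    relaxProj a ω x = x ↔ (inner ℂ a x : ℂ) = 0 := by
  simp [relaxProj, ha, hω]

theorem norm_relaxProj_le (ha : a ≠ 0) (hω : ω ∈ Set.Ioo (0 : ℝ) 2)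
    (x : EuclideanSpace ℂ (Fin d)) : ‖relaxProj a ω x‖ ≤ ‖x‖ := by
  refine (pow_le_pow_iff_left₀ (norm_nonneg _) (norm_nonneg _) two_ne_zero).mp ?_
  have : 0 < ω * (2 - ω) := mul_pos hω.1 (sub_pos.mpr hω.2)
  have : 0 ≤ ω * (2 - ω) * ‖(inner ℂ a x : ℂ)‖ ^ 2 / ‖a‖ ^ 2 := by positivity
  linarith [norm_relaxProj_sq ha ω x]

theorem inner_eq_zero_of_norm_le_norm_relaxProj (ha : a ≠ 0) (hω : ω ∈ Set.Ioo (0 : ℝ) 2)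
    (h : ‖x‖ ≤ ‖relaxProj a ω x‖) : (inner ℂ a x : ℂ) = 0 := by
  have hsq : ‖x‖ ^ 2 ≤ ‖relaxProj a ω x‖ ^ 2 := by gcongr
  rw [norm_relaxProj_sq ha, mul_div_right_comm] at hsq
  have hcoef : 0 < ω * (2 - ω) / ‖a‖ ^ 2 :=
    div_pos (mul_pos hω.1 (sub_pos.mpr hω.2)) (by positivity)
  have : ‖(inner ℂ a x : ℂ)‖ ^ 2 ≤ 0 := by nlinarith
  exact norm_eq_zero.mp (pow_eq_zero_iff two_ne_zero |>.mp (le_antisymm this (sq_nonneg _)))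

end RelaxProj

section Contraction

variable {𝕜 E : Type*} [RCLike 𝕜] [NormedAddCommGroup E] [InnerProductSpace 𝕜 E]
  {H : Submodule 𝕜 E} [H.HasOrthogonalProjection] {C : E →ₗ[𝕜] E} {α : ℝ}

theorem norm_map_sq_eq_of_fix_orthogonal (hfix : ∀ x ∈ Hᗮ, C x = x) (hinv : ∀ x ∈ H, C x ∈ H)
    (x : E) :
    ‖C x‖ ^ 2 = ‖C (H.starProjection x)‖ ^ 2 + ‖x - H.starProjection x‖ ^ 2 := by
  have hq := H.sub_starProjection_mem_orthogonal x
  have hCx : C x = C (H.starProjection x) + (x - H.starProjection x) := by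
    conv_lhs => rw [← add_sub_cancel (H.starProjection x) x]
    rw [map_add, hfix _ hq]
  rw [hCx, sq, sq, sq, norm_add_sq_eq_norm_sq_add_norm_sq_of_inner_eq_zero _ _
    (H.inner_right_of_mem_orthogonal (hinv _ (H.starProjection_apply_mem x)) hq)]

variable (hfix : ∀ x ∈ Hᗮ, C x = x) (hinv : ∀ x ∈ H, C x ∈ H)
  (hcon : ∀ x ∈ H, ‖C x‖ ≤ α * ‖x‖) (hα : α < 1)
include hfix hinv hcon hα

theorem norm_map_le_of_contract (x : E) : ‖C x‖ ≤ ‖x‖ := by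
  have hp := hcon _ (H.starProjection_apply_mem x)
  have hCp : ‖C (H.starProjection x)‖ ≤ ‖H.starProjection x‖ := by
    nlinarith [norm_nonneg (H.starProjection x)]
  refine (pow_le_pow_iff_left₀ (norm_nonneg _) (norm_nonneg _) two_ne_zero).mp ?_
  rw [norm_map_sq_eq_of_fix_orthogonal hfix hinv, H.norm_sq_eq_add_norm_sq_starProjection x,
    H.starProjection_orthogonal_val]
  gcongr

theorem mem_orthogonal_of_norm_le_norm_map {x : E} (h : ‖x‖ ≤ ‖C x‖) : x ∈ Hᗮ := by
  have hp := hcon _ (H.starProjection_apply_mem x)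
  have hsq : ‖x‖ ^ 2 ≤ ‖C x‖ ^ 2 := by gcongr
  rw [norm_map_sq_eq_of_fix_orthogonal hfix hinv, H.norm_sq_eq_add_norm_sq_starProjection x,
    H.starProjection_orthogonal_val] at hsq
  have hp0 : H.starProjection x = 0 := by
    have : ‖H.starProjection x‖ ≤ ‖C (H.starProjection x)‖ :=
      (pow_le_pow_iff_left₀ (norm_nonneg _) (norm_nonneg _) two_ne_zero).mp (by linarith)
    exact norm_eq_zero.mp (by nlinarith [norm_nonneg (H.starProjection x)])
  simpa [hp0] using H.sub_starProjection_mem_orthogonal x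

end Contraction

theorem norm_eq_of_eq_sum_smul {ι E : Type*} [Fintype ι] [SeminormedAddCommGroup E]
    [NormedSpace ℝ E] {w : ι → ℝ} {y : ι → E} {x : E} (hw : ∀ i, 0 < w i) (hw1 : ∑ i, w i = 1)
    (hy : ∀ i, ‖y i‖ ≤ ‖x‖) (hx : x = ∑ i, w i • y i) (i : ι) : ‖y i‖ = ‖x‖ := by
  refine (hy i).antisymm (not_lt.mp fun hlt => ?_)
  have : ∑ j, w j * ‖y j‖ < ∑ j, w j * ‖x‖ :=
    Finset.sum_lt_sum (fun j _ => mul_le_mul_of_nonneg_left (hy j) (hw j).le)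
      ⟨i, Finset.mem_univ i, mul_lt_mul_of_pos_left hlt (hw i)⟩
  rw [← Finset.sum_mul, hw1, one_mul] at this
  refine this.not_ge ?_
  calc ‖x‖ = ‖∑ j, w j • y j‖ := by rw [hx]
    _ ≤ ∑ j, ‖w j • y j‖ := norm_sum_le _ _
    _ = ∑ j, w j * ‖y j‖ := by simp only [norm_smul, Real.norm_of_nonneg (hw _).le]

section Fold

variable {ι E : Type*} (f : ι → E → E)

theorem foldl_eq_self {L : List ι} {x : E} (hx : ∀ v ∈ L, f v x = x) :
    L.foldl (fun y v => f v y) x = x := by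
  induction L with
  | nil => rfl
  | cons v L ih =>
    simp only [List.forall_mem_cons] at hx
    rw [List.foldl_cons, hx.1, ih hx.2]

variable [SeminormedAddGroup E]

theorem norm_foldl_le {L : List ι} (hf : ∀ v ∈ L, ∀ x, ‖f v x‖ ≤ ‖x‖) (x : E) :
    ‖L.foldl (fun y v => f v y) x‖ ≤ ‖x‖ := by
  induction L generalizing x with
  | nil => rfl
  | cons v L ih =>
    simp only [List.forall_mem_cons] at hf
    exact (ih hf.2 _).trans (hf.1 x)

theorem apply_eq_self_of_norm_le_norm_foldl {L : List ι} (hf : ∀ v ∈ L, ∀ x, ‖f v x‖ ≤ ‖x‖)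
    (hrigid : ∀ v ∈ L, ∀ x, ‖x‖ ≤ ‖f v x‖ → f v x = x) {x : E}
    (h : ‖x‖ ≤ ‖L.foldl (fun y v => f v y) x‖) : ∀ v ∈ L, f v x = x := by
  induction L with
  | nil => simp
  | cons v L ih =>
    simp only [List.forall_mem_cons] at hf hrigid ⊢
    rw [List.foldl_cons] at h
    have hv : f v x = x := hrigid.1 x (h.trans (norm_foldl_le f hf.2 _))
    rw [hv] at h
    exact ⟨hv, ih hf.2 hrigid.2 h⟩

end Fold

section FoldRelaxProj

variable {d m : ℕ} {a : Fin m → EuclideanSpace ℂ (Fin d)} {ω : Fin m → ℝ} {L : List (Fin m)}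

theorem foldl_relaxProj_eq_self {x : EuclideanSpace ℂ (Fin d)}
    (hx : ∀ v ∈ L, (inner ℂ (a v) x : ℂ) = 0) :
    L.foldl (fun y v => relaxProj (a v) (ω v) y) x = x :=
  foldl_eq_self _ fun v hv => by simp [relaxProj, hx v hv]

theorem norm_foldl_relaxProj_le (ha : ∀ j, a j ≠ 0) (hω : ∀ v ∈ L, ω v ∈ Set.Ioo (0 : ℝ) 2)
    (x : EuclideanSpace ℂ (Fin d)) :
    ‖L.foldl (fun y v => relaxProj (a v) (ω v) y) x‖ ≤ ‖x‖ :=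
  norm_foldl_le _ (fun v hv => norm_relaxProj_le (ha v) (hω v hv)) x

theorem inner_eq_zero_of_norm_le_norm_foldl_relaxProj (ha : ∀ j, a j ≠ 0)
    (hω : ∀ v ∈ L, ω v ∈ Set.Ioo (0 : ℝ) 2) {x : EuclideanSpace ℂ (Fin d)}
    (h : ‖x‖ ≤ ‖L.foldl (fun y v => relaxProj (a v) (ω v) y) x‖) :
    ∀ v ∈ L, (inner ℂ (a v) x : ℂ) = 0 := by
  have hfix v (hv : v ∈ L) y := relaxProj_eq_self_iff (x := y) (ha v) (hω v hv).1.ne'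
  refine fun v hv => (hfix v hv x).1 (apply_eq_self_of_norm_le_norm_foldl _
    (fun v hv => norm_relaxProj_le (ha v) (hω v hv)) (fun v hv y hy => (hfix v hv y).2 ?_) h v hv)
  exact inner_eq_zero_of_norm_le_norm_relaxProj (ha v) (hω v hv) hy

end FoldRelaxProj

/-- With `T = Σ_i w_i (C_i ∘ R_i)` built from compositions `R_i` of relaxed
projections (parameters in `(0,2)`) along lists `L_i` and operators `C_i` fixing
`{a_u : u ∈ G_i}ᗮ`, leaving `H_i = span{a_u : u ∈ G_i}` invariant and `α_i`-contractive on it,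
where the lists and sets together cover all indices: the kernel of `I - T` equals the null
space `{x : ⟨x, a_j⟩ = 0 for all j}` of the matrix with rows `a_1*, …, a_m*`. -/
theorem stmt_9 {d m c : ℕ} (a : Fin m → EuclideanSpace ℂ (Fin d)) (ha : ∀ j, a j ≠ 0)
    (w : Fin c → ℝ) (hw : ∀ i, 0 < w i) (hw1 : ∑ i, w i = 1)
    (L : Fin c → List (Fin m)) (ω : Fin m → ℝ)
    (hω : ∀ i, ∀ v ∈ L i, ω v ∈ Set.Ioo (0 : ℝ) 2)
    (R : Fin c → EuclideanSpace ℂ (Fin d) → EuclideanSpace ℂ (Fin d))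
    (hR : ∀ i x, R i x = (L i).foldl (fun y v => relaxProj (a v) (ω v) y) x)
    (G : Fin c → Set (Fin m)) (α : Fin c → ℝ) (hα : ∀ i, α i < 1)
    (C : Fin c → (EuclideanSpace ℂ (Fin d) →ₗ[ℂ] EuclideanSpace ℂ (Fin d)))
    (hCfix : ∀ i x, (∀ u ∈ G i, (inner ℂ (a u) x : ℂ) = 0) → C i x = x)
    (hCinv : ∀ i, ∀ x ∈ Submodule.span ℂ (a '' G i), C i x ∈ Submodule.span ℂ (a '' G i))
    (hCcon : ∀ i, ∀ x ∈ Submodule.span ℂ (a '' G i), ‖C i x‖ ≤ α i * ‖x‖)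
    (hcover : ∀ j : Fin m, (∃ i, j ∈ L i) ∨ (∃ i, j ∈ G i))
    (T : EuclideanSpace ℂ (Fin d) → EuclideanSpace ℂ (Fin d))
    (hT : ∀ x, T x = ∑ i, w i • C i (R i x)) :
    {x : EuclideanSpace ℂ (Fin d) | x - T x = 0} =
      {x : EuclideanSpace ℂ (Fin d) | ∀ j, (inner ℂ (a j) x : ℂ) = 0} := by
  have horth i y (hy : y ∈ (Submodule.span ℂ (a '' G i))ᗮ) u (hu : u ∈ G i) :
      inner ℂ (a u) y = 0 :=
    Submodule.inner_right_of_mem_orthogonal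
      (Submodule.subset_span (Set.mem_image_of_mem a hu)) hy
  have hCfixOrth i y (hy : y ∈ (Submodule.span ℂ (a '' G i))ᗮ) : C i y = y :=
    hCfix i y (horth i y hy)
  have hCle i y : ‖C i y‖ ≤ ‖y‖ :=
    norm_map_le_of_contract (hCfixOrth i) (hCinv i) (hCcon i) (hα i) y
  ext x
  refine ⟨fun hx j => ?_, fun hx => ?_⟩
  · have hnorm : ∀ i, ‖C i (R i x)‖ = ‖x‖ := norm_eq_of_eq_sum_smul hw hw1
      (fun i => (hCle i _).trans (hR i x ▸ norm_foldl_relaxProj_le ha (hω i) x))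
      ((sub_eq_zero.mp hx).trans (hT x))
    have hL i : ∀ v ∈ L i, inner ℂ (a v) x = 0 := inner_eq_zero_of_norm_le_norm_foldl_relaxProj ha
      (hω i) (hR i x ▸ (hnorm i).ge.trans (hCle i _))
    rcases hcover j with ⟨i, hj⟩ | ⟨i, hj⟩
    · exact hL i j hj
    · have hCx : ‖x‖ ≤ ‖C i x‖ := by
        rw [← hnorm i, hR, foldl_relaxProj_eq_self (hL i)]
      exact horth i x (mem_orthogonal_of_norm_le_norm_map (hCfixOrth i) (hCinv i) (hCcon i) (hα i)
        hCx) j hj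
  · have hTx : T x = ∑ i, w i • x := by
      refine (hT x).trans (Finset.sum_congr rfl fun i _ => ?_)
      rw [hR, foldl_relaxProj_eq_self fun v _ => hx v, hCfix i x fun u _ => hx u]
    simp [hTx, ← Finset.sum_smul, hw1]
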